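/- arXiv:1311.0434 — 3 statements merged into one kernel-verified Lean document; each statement's English description precedes it below -/
import Mathlib

section
/- Let h : ℝ → ℝ be smooth and nonvanishing, g : ℝ → Matrix (Fin 3) (Fin 3) ℝ smooth with g' = A·g and det g(t) = ±1 for all t, and set H = h·g and λ = -h'/h. Then det H'(t) = ∓ h(t)³ · det(A - λ(t)·I₃); in particular H'(t) is invertible if and only if det(A - λ(t)·I₃) ≠ 0. -/
open Matrix
attribute [local instance] Matrix.normedAddCommGroup Matrix.normedSpace

/-! Since `λ h = -h'`, the product rule gives `H' = h A g + h' g = (A - λ I) H`, so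
`det H' = det g · h³ · det (A - λ I)`, and `det g = ±1`, `h ≠ 0` leave only the last factor. -/

section

variable {n R : Type*} [Fintype n] [DecidableEq n] [CommRing R]

theorem smul_mul_add_smul_eq_sub_smul_one_mul (A M : Matrix n n R) {c c' lam : R}
    (hlam : lam * c = -c') :
    c • (A * M) + c' • M = (A - lam • (1 : Matrix n n R)) * (c • M) := by
  rw [Matrix.sub_mul, Matrix.smul_mul, Matrix.one_mul, Matrix.mul_smul, smul_smul, hlam]
  module

theorem det_sub_smul_one_mul_smul (A M : Matrix n n R) (lam c : R) :
    ((A - lam • (1 : Matrix n n R)) * (c • M)).det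
      = M.det * c ^ Fintype.card n * (A - lam • (1 : Matrix n n R)).det := by
  rw [det_mul, det_smul]
  ring

end

theorem hasDerivAt_smul_of_hasDerivAt_mul {𝕜 n : Type*} [NontriviallyNormedField 𝕜]
    [Fintype n] [DecidableEq n] {A : Matrix n n 𝕜} {g : 𝕜 → Matrix n n 𝕜} {h : 𝕜 → 𝕜}
    {h' lam t : 𝕜} (hg : HasDerivAt g (A * g t) t) (hh : HasDerivAt h h' t)
    (hlam : lam * h t = -h') :
    HasDerivAt (fun s => h s • g s) ((A - lam • (1 : Matrix n n 𝕜)) * (h t • g t)) t := by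
  rw [← smul_mul_add_smul_eq_sub_smul_one_mul A (g t) hlam]
  exact hh.smul hg

theorem det_deriv_homothetic_motion
    (A : Matrix (Fin 3) (Fin 3) ℝ)
    (g : ℝ → Matrix (Fin 3) (Fin 3) ℝ)
    (hg : ∀ t, HasDerivAt g (A * g t) t)
    (hdetg : ∀ t, (g t).det = 1 ∨ (g t).det = -1)
    (h h' : ℝ → ℝ) (hh : ∀ t, HasDerivAt h (h' t) t)
    (hh0 : ∀ t, h t ≠ 0)
    (lam : ℝ → ℝ) (hlam : ∀ t, lam t = -(h' t) / h t)
    (t : ℝ) :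
    (deriv (fun s => h s • g s) t).det
      = (g t).det * (h t) ^ 3 * (A - lam t • (1 : Matrix (Fin 3) (Fin 3) ℝ)).det ∧
    (IsUnit (deriv (fun s => h s • g s) t) ↔
      (A - lam t • (1 : Matrix (Fin 3) (Fin 3) ℝ)).det ≠ 0) := by
  have hlam_mul : lam t * h t = -h' t := by rw [hlam t, div_mul_cancel₀ _ (hh0 t)]
  have hderiv : deriv (fun s => h s • g s) t
      = (A - lam t • (1 : Matrix (Fin 3) (Fin 3) ℝ)) * (h t • g t) :=
    (hasDerivAt_smul_of_hasDerivAt_mul (hg t) (hh t) hlam_mul).deriv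
  have hdet : (deriv (fun s => h s • g s) t).det
      = (g t).det * (h t) ^ 3 * (A - lam t • (1 : Matrix (Fin 3) (Fin 3) ℝ)).det := by
    rw [hderiv, det_sub_smul_one_mul_smul, Fintype.card_fin]
  have hdetg0 : (g t).det ≠ 0 := by rcases hdetg t with h1 | h1 <;> simp [h1]
  refine ⟨hdet, ?_⟩
  rw [isUnit_iff_isUnit_det, isUnit_iff_ne_zero, hdet]
  simp [hdetg0, hh0 t]
end

section
/- Under the hypotheses H = h·g, g' = A·g, det g = ±1, h ≠ 0, λ = -h'/h: det H''(t) = ∓ h(t)³ · det[(A - λ(t)·I₃)² - λ'(t)·I₃]. Hence H''(t) is invertible iff det[(A - λ(t)·I₃)² - λ'(t)·I₃] ≠ 0. -/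
/-!
Differentiating `H = h • g` twice with `g' = A g` gives `H'' = h'' g + 2 h' A g + h A² g`.
Since `λ = -h'/h` has `h λ = -h'` and `h (λ² - λ') = h''`, this is `H'' = h ((A - λ)² - λ') g`,
so `det H'' = h³ det g det((A - λ)² - λ')`, and `det g = ±1` is a unit.
-/

open Matrix
attribute [local instance] Matrix.normedAddCommGroup Matrix.normedSpace

theorem deriv_deriv_smul_of_linear_ode {E : Type*} [NormedAddCommGroup E]
    [NormedSpace ℝ E] (L : E →L[ℝ] E) {g : ℝ → E} (hg : ∀ s, HasDerivAt g (L (g s)) s)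
    {h : ℝ → ℝ} (hh : Differentiable ℝ h) {t : ℝ} (hh' : DifferentiableAt ℝ (deriv h) t) :
    deriv (deriv fun s => h s • g s) t
      = deriv (deriv h) t • g t + (2 * deriv h t) • L (g t) + h t • L (L (g t)) := by
  have hH' : deriv (fun s => h s • g s) = fun s => h s • L (g s) + deriv h s • g s :=
    funext fun s => ((hh s).hasDerivAt.smul (hg s)).deriv
  have hLg : HasDerivAt (fun s => L (g s)) (L (L (g t))) t :=
    L.hasFDerivAt.comp_hasDerivAt t (hg t)
  have hH'' : HasDerivAt (fun s => h s • L (g s) + deriv h s • g s)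
      ((h t • L (L (g t)) + deriv h t • L (g t)) + (deriv h t • L (g t) + deriv (deriv h) t • g t))
      t :=
    ((hh t).hasDerivAt.smul hLg).add (hh'.hasDerivAt.smul (hg t))
  rw [hH', hH''.deriv]
  module

theorem mul_sq_sub_deriv_of_eq_neg_deriv_div {h lam : ℝ → ℝ} {t : ℝ}
    (hh : DifferentiableAt ℝ h t) (hh' : DifferentiableAt ℝ (deriv h) t) (ht : h t ≠ 0)
    (hlam : ∀ s, lam s = -deriv h s / h s) :
    h t * (lam t ^ 2 - deriv lam t) = deriv (deriv h) t := by
  have hlam' : deriv lam t = (-deriv (deriv h) t * h t - -deriv h t * deriv h t) / h t ^ 2 := by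
    rw [funext hlam]
    exact (hh'.hasDerivAt.neg.div hh.hasDerivAt ht).deriv
  rw [hlam', hlam]
  field_simp
  ring

theorem sub_smul_one_sq_sub_smul_one_mul {K R : Type*} [CommRing K] [Ring R] [Algebra K R]
    (a x : R) (c d : K) :
    ((a - c • 1) ^ 2 - d • 1) * x = (c ^ 2 - d) • x - (2 * c) • (a * x) + a * (a * x) := by
  simp only [sq, sub_mul, mul_sub, smul_mul_assoc, mul_smul_comm, one_mul, mul_one, mul_assoc,
    sub_smul, two_mul, add_smul]
  module

theorem det_second_deriv_homothetic_motion
    (A : Matrix (Fin 3) (Fin 3) ℝ)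
    (g : ℝ → Matrix (Fin 3) (Fin 3) ℝ)
    (hgdiff : Differentiable ℝ g) (hg : ∀ t, deriv g t = A * g t)
    (hdetg : ∀ t, (g t).det = 1 ∨ (g t).det = -1)
    (h : ℝ → ℝ) (hhdiff : Differentiable ℝ h)
    (hhdiff2 : Differentiable ℝ (deriv h))
    (hh0 : ∀ t, h t ≠ 0)
    (lam : ℝ → ℝ) (hlam : ∀ t, lam t = -(deriv h t) / h t)
    (t : ℝ) :
    (deriv (deriv (fun s => h s • g s)) t).det
      = (g t).det * (h t) ^ 3 *
        ((A - lam t • (1 : Matrix (Fin 3) (Fin 3) ℝ)) ^ 2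
          - deriv lam t • (1 : Matrix (Fin 3) (Fin 3) ℝ)).det ∧
    (IsUnit (deriv (deriv (fun s => h s • g s)) t) ↔
      ((A - lam t • (1 : Matrix (Fin 3) (Fin 3) ℝ)) ^ 2
        - deriv lam t • (1 : Matrix (Fin 3) (Fin 3) ℝ)).det ≠ 0) := by
  set L := (LinearMap.mulLeft ℝ A).toContinuousLinearMap
  have hgL (s : ℝ) : HasDerivAt g (L (g s)) s := (hgdiff s).hasDerivAt.congr_deriv (hg s)
  have hderiv_h : deriv h t = -(h t * lam t) := by rw [hlam]; field_simp [hh0 t]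
  have key : deriv (deriv fun s => h s • g s) t
      = h t • (((A - lam t • 1) ^ 2 - deriv lam t • 1) * g t) := by
    refine (deriv_deriv_smul_of_linear_ode L hgL hhdiff (hhdiff2 t)).trans ?_
    change _ + _ • (A * g t) + _ • (A * (A * g t)) = _
    rw [sub_smul_one_sq_sub_smul_one_mul,
      ← mul_sq_sub_deriv_of_eq_neg_deriv_div (hhdiff t) (hhdiff2 t) (hh0 t) hlam, hderiv_h]
    module
  have hdet : (deriv (deriv fun s => h s • g s) t).det
      = (g t).det * h t ^ 3 * ((A - lam t • 1) ^ 2 - deriv lam t • 1).det := by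
    rw [key, det_smul, det_mul, Fintype.card_fin]
    ring
  have hg0 : (g t).det ≠ 0 := by rcases hdetg t with h1 | h1 <;> simp [h1]
  refine ⟨hdet, ?_⟩
  rw [isUnit_iff_isUnit_det, isUnit_iff_ne_zero, hdet]
  simp [hg0, hh0 t]
end

section
/- If h : I → ℝ is twice differentiable and nonvanishing on an open interval I, λ = -h'/h, and λ satisfies λ' = (λ - α)² for a real constant α, then there exist constants c₇, c₈ with h(t) = (c₇ + c₈ t)·e^{-α t} on I. -/
/-!
Put `μ = λ - α` and `g(t) = h(t) e^{α t}`. Since `h' = -λ h`, we get `g' = -μ g`, and then the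
Riccati equation `μ' = μ²` gives `(μ g)' = μ² g - μ² g = 0`. So `g'` is constant, `g` is affine on
the interval, and `h = g e^{-α t}`.
-/

open Real

theorem Convex.apply_eq_of_hasDerivAt_zero {𝕜 G : Type*} [RCLike 𝕜] [NormedAddCommGroup G]
    [NormedSpace 𝕜 G] {f : 𝕜 → G} {s : Set 𝕜} (hs : Convex ℝ s)
    (hf : ∀ x ∈ s, HasDerivAt f 0 x) {x y : 𝕜} (hx : x ∈ s) (hy : y ∈ s) : f x = f y := by
  have hle := hs.norm_image_sub_le_of_norm_hasDerivWithin_le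
    (fun z hz => (hf z hz).hasDerivWithinAt) (fun _ _ => norm_zero.le) hx hy
  rw [zero_mul, norm_le_zero_iff, sub_eq_zero] at hle
  exact hle.symm

theorem Convex.exists_eq_add_mul_of_hasDerivAt {f f' : ℝ → ℝ} {s : Set ℝ} (hs : Convex ℝ s)
    (hf : ∀ t ∈ s, HasDerivAt f (f' t) t) (hf' : ∀ t ∈ s, HasDerivAt f' 0 t) :
    ∃ a b : ℝ, ∀ t ∈ s, f t = a + b * t := by
  rcases s.eq_empty_or_nonempty with rfl | ⟨t₀, ht₀⟩
  · exact ⟨0, 0, by simp⟩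
  have hlin : ∀ t ∈ s, HasDerivAt (fun u => f u - f' t₀ * u) 0 t := fun t ht =>
    ((hf t ht).fun_sub ((hasDerivAt_id' t).const_mul (f' t₀))).congr_deriv <| by
      rw [hs.apply_eq_of_hasDerivAt_zero hf' ht ht₀, mul_one, sub_self]
  refine ⟨f t₀ - f' t₀ * t₀, f' t₀, fun t ht => ?_⟩
  linarith [hs.apply_eq_of_hasDerivAt_zero hlin ht ht₀]

theorem HasDerivAt.mul_of_riccati {μ g : ℝ → ℝ} {t : ℝ} (hμ : HasDerivAt μ (μ t ^ 2) t)
    (hg : HasDerivAt g (-(μ t * g t)) t) : HasDerivAt (fun u => μ u * g u) 0 t :=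
  (hμ.mul hg).congr_deriv (by ring)

theorem Convex.exists_eq_add_mul_of_riccati {μ g : ℝ → ℝ} {s : Set ℝ} (hs : Convex ℝ s)
    (hμ : ∀ t ∈ s, HasDerivAt μ (μ t ^ 2) t) (hg : ∀ t ∈ s, HasDerivAt g (-(μ t * g t)) t) :
    ∃ a b : ℝ, ∀ t ∈ s, g t = a + b * t :=
  hs.exists_eq_add_mul_of_hasDerivAt hg fun t ht =>
    ((hμ t ht).mul_of_riccati (hg t ht)).fun_neg.congr_deriv neg_zero

theorem ode_lam_shift_sq_general
    (I : Set ℝ) (hIc : I.OrdConnected)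
    (α : ℝ) (h h' : ℝ → ℝ)
    (hh0 : ∀ t ∈ I, h t ≠ 0)
    (hh : ∀ t ∈ I, HasDerivAt h (h' t) t)
    (lam : ℝ → ℝ) (hlamdef : ∀ t ∈ I, lam t = -(h' t) / h t)
    (hlam : ∀ t ∈ I, HasDerivAt lam ((lam t - α) ^ 2) t) :
    ∃ c₇ c₈ : ℝ, ∀ t ∈ I, h t = (c₇ + c₈ * t) * Real.exp (-α * t) := by
  have hh'_eq : ∀ t ∈ I, h' t = -(lam t * h t) := fun t ht => by
    rw [hlamdef t ht, div_mul_cancel₀ _ (hh0 t ht), neg_neg]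
  have hμ : ∀ t ∈ I, HasDerivAt (fun u => lam u - α) ((lam t - α) ^ 2) t :=
    fun t ht => (hlam t ht).sub_const α
  have hg : ∀ t ∈ I, HasDerivAt (fun u => h u * exp (α * u))
      (-((lam t - α) * (h t * exp (α * t)))) t := fun t ht => by
    refine ((hh t ht).mul ((hasDerivAt_id' t).const_mul α).exp).congr_deriv ?_
    rw [hh'_eq t ht]
    ring
  obtain ⟨c₇, c₈, hline⟩ := (convex_iff_ordConnected.mpr hIc).exists_eq_add_mul_of_riccati hμ hg
  refine ⟨c₇, c₈, fun t ht => ?_⟩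
  rw [← hline t ht, mul_assoc, ← exp_add, neg_mul, add_neg_cancel, exp_zero, mul_one]

theorem ode_lam_shift_sq
    (I : Set ℝ) (hIo : IsOpen I) (hIc : I.OrdConnected)
    (α : ℝ) (h h' h'' : ℝ → ℝ)
    (hh0 : ∀ t ∈ I, h t ≠ 0)
    (hh : ∀ t ∈ I, HasDerivAt h (h' t) t)
    (hh' : ∀ t ∈ I, HasDerivAt h' (h'' t) t)
    (lam : ℝ → ℝ) (hlamdef : ∀ t ∈ I, lam t = -(h' t) / h t)
    (hlam : ∀ t ∈ I, HasDerivAt lam ((lam t - α) ^ 2) t) :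
    ∃ c₇ c₈ : ℝ, ∀ t ∈ I, h t = (c₇ + c₈ * t) * Real.exp (-α * t) :=
  ode_lam_shift_sq_general I hIc α h h' hh0 hh lam hlamdef hlam
end
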